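/- arXiv:2112.06834 — 2 statements merged into one kernel-verified Lean document; each statement's English description precedes it below -/
import Mathlib

section
/- Let {X_ℓ, f_ℓ} and {Y_ℓ, g_ℓ} be inverse sequences of compact metric spaces with surjective continuous bonding functions, and let g : varprojlim{X_ℓ, f_ℓ} → varprojlim{Y_ℓ, g_ℓ} be a continuous function. Then there are sequences (n_ℓ) and (m_ℓ) of positive integers such that: (1) m_{k+1} ≥ m_k and n_{k+1} > n_k for each positive integer k; (2) m_k ≥ n_k for each positive integer k; (3) for each positive integer k, each j ∈ {1, …, n_k}, each positive integer r > k, and each x ∈ X_{m_r}, g_{j,n_r}(T_{n_r,m_r}(g)(x)) ⊆ g_{j,n_k}(T_{n_k,m_k}(g)(f_{m_k,m_r}(x))); (4) for each positive integer k, each j ∈ {1, …, n_k}, and each x ∈ varprojlim{X_ℓ, f_ℓ}, q_j(g(x)) ∈ g_{j,n_k}(T_{n_k,m_k}(g)(p_{m_k}(x))); (5) for each positive integer j and each x ∈ varprojlim{X_ℓ, f_ℓ}, lim_{k→∞} diam(g_{j,n_k}(T_{n_k,m_k}(g)(p_{m_k}(x)))) = 0. -/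
/-!
Taking `n_k = m_k = k` works. Properties (3) and (4) hold because `g_{j,n} ∘ T_{n,m}(g)` sends
`x ∈ X_m` to `{q_j (g w) | p_m w = x}`, and `p_m w = x` forces `p_k w = f_{k,m} x` for `k ≤ m`.
For (5), the inverse limit is compact, so `q_j ∘ g` is uniformly continuous; since the product
uniformity is generated by the coordinates, and agreement in coordinate `m` implies agreement in
all coordinates below `m`, points agreeing in one far enough coordinate have `q_j ∘ g`-images
as close as we like.
-/

open Metric Filter Set Function

/-- The inverse limit of an inverse sequence `{X n, f n}` of spaces with
single-valued bonding maps `f n : X (n+1) → X n`. -/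
def invLim (X : ℕ → Type*) (f : ∀ n, X (n + 1) → X n) : Set (∀ n, X n) :=
  {x | ∀ n, x n = f n (x (n + 1))}

/-- The composite bonding map `f_{n,m} : X m → X n` for `n ≤ m`. -/
def bondMap {X : ℕ → Type*} (f : ∀ n, X (n + 1) → X n) {n m : ℕ} (h : n ≤ m) :
    X m → X n :=
  Nat.leRecOn (C := fun k => X k → X n) h (fun {k} g => g ∘ f k) id

/-- A set-valued function is upper semicontinuous (with nonempty closed values):
all of its values are nonempty closed sets and its graph is closed. -/
def IsUSC {A B : Type*} [TopologicalSpace A] [TopologicalSpace B] (F : A → Set B) : Prop :=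
  (∀ a, (F a).Nonempty) ∧ (∀ a, IsClosed (F a)) ∧ IsClosed {p : A × B | p.2 ∈ F p.1}

/-- The `T_{n,m}` transformation of a map between inverse limits:
`T_{n,m}(g)(x) = q_n (g (p_m ⁻¹ x))`. -/
def Ttrans {X Y : ℕ → Type*} {f : ∀ n, X (n + 1) → X n} {gs : ∀ n, Y (n + 1) → Y n}
    (g : ↥(invLim X f) → ↥(invLim Y gs)) (n m : ℕ) (x : X m) : Set (Y n) :=
  {y | ∃ z : ↥(invLim X f), z.1 m = x ∧ (g z).1 n = y}

/-- A space has the fixed point property if every continuous self-map has a fixed point. -/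
def HasFPP (Z : Type*) [TopologicalSpace Z] : Prop :=
  ∀ g : Z → Z, Continuous g → ∃ p, g p = p

section bondMap

variable {X : ℕ → Type*} (f : ∀ n, X (n + 1) → X n)

lemma bondMap_self {n : ℕ} (x : X n) : bondMap f le_rfl x = x := by
  unfold bondMap
  rw [Nat.leRecOn_self]
  rfl

lemma bondMap_succ {n m : ℕ} (h : n ≤ m) (x : X (m + 1)) :
    bondMap f (h.trans (Nat.le_succ m)) x = bondMap f h (f m x) := by
  unfold bondMap
  rw [Nat.leRecOn_succ h]
  rfl

end bondMap

namespace invLim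

variable {X : ℕ → Type*} {f : ∀ n, X (n + 1) → X n}

lemma bondMap_apply (z : invLim X f) {n m : ℕ} (h : n ≤ m) : bondMap f h (z.1 m) = z.1 n := by
  induction m, h using Nat.le_induction with
  | base => exact bondMap_self f _
  | succ m h ih => rw [bondMap_succ f h, ← z.2 m, ih]

lemma coord_eq_of_le {z z' : invLim X f} {n m : ℕ} (h : n ≤ m) (hm : z.1 m = z'.1 m) :
    z.1 n = z'.1 n := by
  rw [← bondMap_apply z h, ← bondMap_apply z' h, hm]

lemma isClosed [∀ n, TopologicalSpace (X n)] [∀ n, T2Space (X n)]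
    (hfc : ∀ n, Continuous (f n)) : IsClosed (invLim X f) := by
  simp only [invLim, ofPred_forall]
  exact isClosed_iInter fun n =>
    isClosed_eq (continuous_apply n) ((hfc n).comp (continuous_apply (n + 1)))

lemma compactSpace [∀ n, TopologicalSpace (X n)] [∀ n, T2Space (X n)]
    [∀ n, CompactSpace (X n)] (hfc : ∀ n, Continuous (f n)) : CompactSpace (invLim X f) :=
  isCompact_iff_compactSpace.mp (isClosed hfc).isCompact

lemma iInf_principal_coord_eq_le_uniformity [∀ n, UniformSpace (X n)] :
    ⨅ m, 𝓟 {p : invLim X f × invLim X f | p.1.1 m = p.2.1 m} ≤ uniformity ↥(invLim X f) := by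
  rw [uniformity_subtype, Pi.uniformity, comap_iInf]
  refine le_iInf fun i => iInf_le_of_le i ?_
  rw [comap_comap]
  refine Tendsto.le_comap (Tendsto.mono_right ?_ refl_le_uniformity)
  exact tendsto_principal_principal.2 fun p hp => hp

lemma exists_dist_lt_of_coord_eq [∀ n, UniformSpace (X n)] [CompactSpace (invLim X f)]
    {Z : Type*} [PseudoMetricSpace Z] {φ : invLim X f → Z} (hφ : Continuous φ)
    {ε : ℝ} (hε : 0 < ε) :
    ∃ m, ∀ z z' : invLim X f, z.1 m = z'.1 m → dist (φ z) (φ z') < ε := by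
  have hclose := iInf_principal_coord_eq_le_uniformity
    (CompactSpace.uniformContinuous_of_continuous hφ (dist_mem_uniformity hε))
  have hanti : Antitone fun m => 𝓟 {p : invLim X f × invLim X f | p.1.1 m = p.2.1 m} :=
    fun _ _ h => principal_mono.2 fun _ hp => coord_eq_of_le h hp
  obtain ⟨m, hm⟩ := (mem_iInf_of_directed hanti.directed_ge _).1 hclose
  exact ⟨m, fun z z' h => hm (show (z, z') ∈ _ from h)⟩

lemma tendsto_diam_image_coord_fiber [∀ n, UniformSpace (X n)] [CompactSpace (invLim X f)]
    {Z : Type*} [PseudoMetricSpace Z] {φ : invLim X f → Z} (hφ : Continuous φ)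
    (z : invLim X f) :
    Tendsto (fun m => diam (φ '' {w : invLim X f | w.1 m = z.1 m})) atTop (nhds 0) := by
  rw [Metric.tendsto_atTop]
  intro ε hε
  obtain ⟨m₀, hm₀⟩ := exists_dist_lt_of_coord_eq hφ (half_pos hε)
  refine ⟨m₀, fun m hm => ?_⟩
  have hdiam : diam (φ '' {w : invLim X f | w.1 m = z.1 m}) ≤ ε / 2 := by
    refine diam_le_of_forall_dist_le (half_pos hε).le ?_
    rintro _ ⟨w, hw, rfl⟩ _ ⟨w', hw', rfl⟩
    exact (hm₀ w w' (coord_eq_of_le hm (hw.trans hw'.symm))).le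
  rw [Real.dist_0_eq_abs, abs_of_nonneg diam_nonneg]
  linarith

end invLim

lemma bondMap_image_Ttrans {X Y : ℕ → Type*} {f : ∀ n, X (n + 1) → X n}
    {gs : ∀ n, Y (n + 1) → Y n} (g : invLim X f → invLim Y gs) {j n m : ℕ} (hj : j ≤ n)
    (x : X m) :
    bondMap gs hj '' Ttrans g n m x = (fun w => (g w).1 j) '' {w | w.1 m = x} := by
  ext y
  constructor
  · rintro ⟨_, ⟨w, hw, rfl⟩, rfl⟩
    exact ⟨w, hw, (invLim.bondMap_apply (g w) hj).symm⟩
  · rintro ⟨w, hw, rfl⟩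
    exact ⟨(g w).1 n, ⟨w, hw, rfl⟩, invLim.bondMap_apply (g w) hj⟩

theorem stmt5_general
    {X Y : ℕ → Type*} [∀ n, MetricSpace (X n)] [∀ n, CompactSpace (X n)]
    [∀ n, MetricSpace (Y n)]
    (f : ∀ n, X (n + 1) → X n) (gs : ∀ n, Y (n + 1) → Y n)
    (hfc : ∀ n, Continuous (f n))
    (g : ↥(invLim X f) → ↥(invLim Y gs)) (hg : Continuous g) :
    ∃ ns ms : ℕ → ℕ,
      (∀ k, ms k ≤ ms (k + 1)) ∧ (∀ k, ns k < ns (k + 1)) ∧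
      (∀ k, ns k ≤ ms k) ∧
      (∀ k r : ℕ, k < r → ∀ (hnr : ns k ≤ ns r) (hmr : ms k ≤ ms r),
        ∀ j : ℕ, ∀ hj : j ≤ ns k, ∀ x : X (ms r),
          bondMap gs (hj.trans hnr) '' Ttrans g (ns r) (ms r) x ⊆
            bondMap gs hj '' Ttrans g (ns k) (ms k) (bondMap f hmr x)) ∧
      (∀ k j : ℕ, ∀ hj : j ≤ ns k, ∀ z : ↥(invLim X f),
        (g z).1 j ∈ bondMap gs hj '' Ttrans g (ns k) (ms k) (z.1 (ms k))) ∧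
      (∀ j : ℕ, ∀ z : ↥(invLim X f),
        Tendsto (fun k =>
            diam (if hj : j ≤ ns k then
              bondMap gs hj '' Ttrans g (ns k) (ms k) (z.1 (ms k))
            else (∅ : Set (Y j))))
          atTop (nhds (0 : ℝ))) := by
  have := invLim.compactSpace hfc
  refine ⟨id, id, fun k => k.le_succ, fun k => k.lt_succ_self, fun k => le_rfl, ?_, ?_, ?_⟩
  · intro k r _ hnr hmr j hj x
    rw [bondMap_image_Ttrans, bondMap_image_Ttrans]
    exact image_mono fun w hw => (hw ▸ invLim.bondMap_apply w hmr).symm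
  · intro k j hj z
    rw [bondMap_image_Ttrans]
    exact mem_image_of_mem _ rfl
  · intro j z
    have hφ : Continuous fun w : invLim X f => (g w).1 j :=
      (continuous_apply j).comp (continuous_subtype_val.comp hg)
    refine (invLim.tendsto_diam_image_coord_fiber hφ z).congr' ?_
    filter_upwards [eventually_ge_atTop j] with k hk
    rw [dif_pos (show j ≤ id k from hk), bondMap_image_Ttrans]
    rfl

theorem stmt5
    {X Y : ℕ → Type*} [∀ n, MetricSpace (X n)] [∀ n, CompactSpace (X n)]
    [∀ n, MetricSpace (Y n)] [∀ n, CompactSpace (Y n)]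
    (f : ∀ n, X (n + 1) → X n) (gs : ∀ n, Y (n + 1) → Y n)
    (hfc : ∀ n, Continuous (f n)) (hfs : ∀ n, Surjective (f n))
    (hgc : ∀ n, Continuous (gs n)) (hgs : ∀ n, Surjective (gs n))
    (g : ↥(invLim X f) → ↥(invLim Y gs)) (hg : Continuous g) :
    ∃ ns ms : ℕ → ℕ,
      (∀ k, ms k ≤ ms (k + 1)) ∧ (∀ k, ns k < ns (k + 1)) ∧
      (∀ k, ns k ≤ ms k) ∧
      (∀ k r : ℕ, k < r → ∀ (hnr : ns k ≤ ns r) (hmr : ms k ≤ ms r),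
        ∀ j : ℕ, ∀ hj : j ≤ ns k, ∀ x : X (ms r),
          bondMap gs (hj.trans hnr) '' Ttrans g (ns r) (ms r) x ⊆
            bondMap gs hj '' Ttrans g (ns k) (ms k) (bondMap f hmr x)) ∧
      (∀ k j : ℕ, ∀ hj : j ≤ ns k, ∀ z : ↥(invLim X f),
        (g z).1 j ∈ bondMap gs hj '' Ttrans g (ns k) (ms k) (z.1 (ms k))) ∧
      (∀ j : ℕ, ∀ z : ↥(invLim X f),
        Tendsto (fun k =>
            diam (if hj : j ≤ ns k then
              bondMap gs hj '' Ttrans g (ns k) (ms k) (z.1 (ms k))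
            else (∅ : Set (Y j))))
          atTop (nhds (0 : ℝ))) :=
  stmt5_general f gs hfc g hg
end

section
/- Let {X_ℓ, f_ℓ} and {Y_ℓ, g_ℓ} be inverse sequences of compact metric spaces with surjective continuous bonding functions, let (n_ℓ) and (m_ℓ) be sequences of positive integers with m_{k+1} ≥ m_k, n_{k+1} > n_k, and m_k ≥ n_k for each k, and let (H_ℓ) be a sequence of upper semicontinuous set-valued functions H_ℓ : X_{m_ℓ} ⊸ Y_{n_ℓ} such that: (a) for each positive integer k, each j ∈ {1, …, n_k}, each positive integer r > k and each x ∈ X_{m_r}, g_{j,n_r}(H_r(x)) ⊆ g_{j,n_k}(H_k(f_{m_k,m_r}(x))); (b) for each positive integer j and each x ∈ varprojlim{X_ℓ, f_ℓ}, lim_{k→∞} diam(g_{j,n_k}(H_k(p_{m_k}(x)))) = 0; and (c) the graph of each H_k is surjective. Then there is a continuous surjection g : varprojlim{X_ℓ, f_ℓ} → varprojlim{Y_ℓ, g_ℓ} such that for each positive integer k, each j ∈ {1, …, n_k}, and each x ∈ varprojlim{X_ℓ, f_ℓ}, q_j(g(x)) ∈ g_{j,n_k}(H_k(p_{m_k}(x))).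 -/
open Metric Filter Set Function

/-!
For `z` in the inverse limit and a fixed coordinate `j`, the sets `g_{j,n_k}(H_k(p_{m_k} z))`
(for `n_k ≥ j`) form a decreasing sequence of nonempty compacta by (a), and their diameters tend
to `0` by (b); so they meet in exactly one point, which is the `j`-th coordinate of `g z`.
The graph of each coordinate of `g` is an intersection of sets pulled back from the closed graphs
of the `H_k`, hence closed, and a map into a compact Hausdorff space with closed graph is
continuous. For surjectivity, given `w`, the points `z` with `w_{n_k} ∈ H_k(z_{m_k})` form a
decreasing sequence of closed sets, nonempty by (c), so some `z` lies in all of them; then every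
coordinate of `w` lies in the sets defining `g z`, so `g z = w`.
-/

open Topology

section BondMap

variable {X : ℕ → Type*} (f : ∀ n, X (n + 1) → X n)

theorem bondMap_self_s7 {n : ℕ} (h : n ≤ n) : bondMap f h = id :=
  Nat.leRecOn_self _

theorem bondMap_succ_s7 {n m : ℕ} (h₁ : n ≤ m) (h₂ : n ≤ m + 1) :
    bondMap f h₂ = bondMap f h₁ ∘ f m :=
  Nat.leRecOn_succ (C := fun k => X k → X n) h₁ _

theorem bondMap_succ_self (n : ℕ) : bondMap f (Nat.le_succ n) = f n := by
  rw [bondMap_succ_s7 f le_rfl, bondMap_self_s7]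
  rfl

theorem bondMap_comp {a b c : ℕ} (hab : a ≤ b) (hbc : b ≤ c) :
    bondMap f hab ∘ bondMap f hbc = bondMap f (hab.trans hbc) := by
  induction c, hbc using Nat.le_induction with
  | base => rw [bondMap_self_s7]; rfl
  | succ c hbc ih => rw [bondMap_succ_s7 f hbc, bondMap_succ_s7 f (hab.trans hbc), ← ih]; rfl

theorem continuous_bondMap [∀ n, TopologicalSpace (X n)] (hf : ∀ n, Continuous (f n))
    {n m : ℕ} (h : n ≤ m) : Continuous (bondMap f h) := by
  induction m, h using Nat.le_induction with
  | base => rw [bondMap_self_s7]; exact continuous_id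
  | succ m hm ih => rw [bondMap_succ_s7 f hm]; exact ih.comp (hf m)

theorem apply_eq_bondMap_of_mem_invLim {x : ∀ n, X n} (hx : x ∈ invLim X f) {n m : ℕ}
    (h : n ≤ m) : x n = bondMap f h (x m) := by
  induction m, h using Nat.le_induction with
  | base => rw [bondMap_self_s7]; rfl
  | succ m hm ih => rw [bondMap_succ_s7 f hm, comp_apply, ← hx m, ih]

theorem isClosed_invLim [∀ n, TopologicalSpace (X n)] [∀ n, T2Space (X n)]
    (hf : ∀ n, Continuous (f n)) : IsClosed (invLim X f) := by
  simp only [invLim, ofPred_forall]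
  exact isClosed_iInter fun n =>
    isClosed_eq (continuous_apply n) ((hf n).comp (continuous_apply (n + 1)))

theorem exists_mem_invLim_apply_eq (hf : ∀ n, Surjective (f n)) {m : ℕ} (x : X m) :
    ∃ z ∈ invLim X f, z m = x := by
  let s : ∀ k, X (m + k) := fun k => Nat.rec x (fun k sk => surjInv (hf (m + k)) sk) k
  have hs : ∀ k, f (m + k) (s (k + 1)) = s k := fun k => surjInv_eq (hf _) _
  have hsx : ∀ k, bondMap f (Nat.le_add_right m k) (s k) = x := by
    intro k
    induction k with
    | zero => rw [bondMap_self_s7]; rfl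
    | succ k ih => rw [bondMap_succ_s7 f (Nat.le_add_right m k), comp_apply, hs k, ih]
  refine ⟨fun n => bondMap f (Nat.le_add_left n m) (s n), fun n => ?_, hsx m⟩
  calc bondMap f (Nat.le_add_left n m) (s n)
      = bondMap f (Nat.le_add_left n m) (f (m + n) (s (n + 1))) := by rw [hs n]
    _ = bondMap f ((Nat.le_succ n).trans (Nat.le_add_left (n + 1) m)) (s (n + 1)) := by
        rw [bondMap_succ_s7 f (Nat.le_add_left n m)]; rfl
    _ = f n (bondMap f (Nat.le_add_left (n + 1) m) (s (n + 1))) := by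
        rw [← bondMap_succ_self f n, ← bondMap_comp]; rfl

end BondMap

section ClosedGraph

variable {A B C : Type*} [TopologicalSpace A] [TopologicalSpace B] [TopologicalSpace C]

theorem isClosed_setOf_mem_image [CompactSpace A] [CompactSpace B] [T2Space A] [T2Space C]
    {F : A → Set B} (hF : IsClosed {p : A × B | p.2 ∈ F p.1}) {g : B → C}
    (hg : Continuous g) : IsClosed {p : A × C | p.2 ∈ g '' F p.1} := by
  have h : {p : A × C | p.2 ∈ g '' F p.1} = Prod.map id g '' {p : A × B | p.2 ∈ F p.1} := by
    ext ⟨a, c⟩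
    simp
  rw [h]
  exact (hF.isCompact.image (continuous_id.prodMap hg)).isClosed

theorem continuous_of_isClosed_graph [CompactSpace B] {φ : A → B}
    (h : IsClosed {p : A × B | p.2 = φ p.1}) : Continuous φ := by
  refine continuous_iff_isClosed.mpr fun s hs => ?_
  have hpre : φ ⁻¹' s = Prod.fst '' ({p : A × B | p.2 = φ p.1} ∩ univ ×ˢ s) := by
    ext a
    simp
  rw [hpre]
  exact isClosedMap_fst_of_compactSpace _ (h.inter (isClosed_univ.prod hs))

end ClosedGraph

theorem eq_of_eventually_mem_of_tendsto_diam {α ι : Type*} [MetricSpace α] {l : Filter ι}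
    [l.NeBot] {S : ι → Set α} (hS : Tendsto (fun i => diam (S i)) l (𝓝 0))
    (hbdd : ∀ᶠ i in l, Bornology.IsBounded (S i)) {a b : α} (ha : ∀ᶠ i in l, a ∈ S i)
    (hb : ∀ᶠ i in l, b ∈ S i) : a = b := by
  refine dist_le_zero.mp (ge_of_tendsto hS ?_)
  filter_upwards [hbdd, ha, hb] with i hi hai hbi
  exact dist_le_diam_of_mem hi hai hbi

section Approximation

variable {X Y : ℕ → Type*} {ns ms : ℕ → ℕ} (f : ∀ n, X (n + 1) → X n)
  (gs : ∀ n, Y (n + 1) → Y n) (H : ∀ k, X (ms k) → Set (Y (ns k)))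

def HasNestedImages : Prop :=
  ∀ k (hn : ns k ≤ ns (k + 1)) (hm : ms k ≤ ms (k + 1)) j (hj : j ≤ ns k) y,
    bondMap gs (hj.trans hn) '' H (k + 1) y ⊆ bondMap gs hj '' H k (bondMap f hm y)

/-- `g_{j,n_k}(H_k(p_{m_k} x))`, empty when `j > n_k` as in condition (b). -/
def approxSet (x : ∀ n, X n) (j k : ℕ) : Set (Y j) :=
  if hj : j ≤ ns k then bondMap gs hj '' H k (x (ms k)) else ∅

def limSet (x : ∀ n, X n) (j : ℕ) : Set (Y j) :=
  {w | ∀ k (hj : j ≤ ns k), w ∈ bondMap gs hj '' H k (x (ms k))}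

variable {f gs H}

theorem approxSet_of_le {x : ∀ n, X n} {j k : ℕ} (hj : j ≤ ns k) :
    approxSet gs H x j k = bondMap gs hj '' H k (x (ms k)) :=
  dif_pos hj

theorem approxSet_nonempty (hH : ∀ k a, (H k a).Nonempty) {x : ∀ n, X n} {j k : ℕ}
    (hj : j ≤ ns k) : (approxSet gs H x j k).Nonempty := by
  rw [approxSet_of_le hj]
  exact (hH k _).image _

theorem isCompact_approxSet [∀ n, TopologicalSpace (Y n)] [∀ n, CompactSpace (Y n)]
    (hgc : ∀ n, Continuous (gs n)) (hH : ∀ k a, IsClosed (H k a)) (x : ∀ n, X n) (j k : ℕ) :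
    IsCompact (approxSet gs H x j k) := by
  by_cases hj : j ≤ ns k
  · rw [approxSet_of_le hj]
    exact (hH k _).isCompact.image (continuous_bondMap gs hgc hj)
  · rw [approxSet, dif_neg hj]
    exact isCompact_empty

theorem approxSet_succ_subset {x : ∀ n, X n} (hx : x ∈ invLim X f) (hns : Monotone ns)
    (hms : Monotone ms) (ha : HasNestedImages f gs H) {j k : ℕ} (hj : j ≤ ns k) : approxSet gs H x j (k + 1) ⊆ approxSet gs H x j k := by
  have hk := k.le_succ
  rw [approxSet_of_le hj, approxSet_of_le (hj.trans (hns hk)),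
    apply_eq_bondMap_of_mem_invLim f hx (hms hk)]
  exact ha k (hns hk) (hms hk) j hj _

theorem approxSet_subset_of_le {x : ∀ n, X n} (hx : x ∈ invLim X f) (hns : Monotone ns)
    (hms : Monotone ms) (ha : HasNestedImages f gs H) {j k k' : ℕ} (hj : j ≤ ns k) (hkk' : k ≤ k') :
    approxSet gs H x j k' ⊆ approxSet gs H x j k := by
  induction k', hkk' using Nat.le_induction with
  | base => exact subset_rfl
  | succ k' hkk' ih => exact (approxSet_succ_subset hx hns hms ha (hj.trans (hns hkk'))).trans ih

theorem limSet_nonempty [∀ n, TopologicalSpace (Y n)] [∀ n, CompactSpace (Y n)]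
    [∀ n, T2Space (Y n)] {x : ∀ n, X n} (hx : x ∈ invLim X f)
    (hgc : ∀ n, Continuous (gs n)) (hne : ∀ k a, (H k a).Nonempty)
    (hcl : ∀ k a, IsClosed (H k a)) (hns : StrictMono ns) (hms : Monotone ms)
    (ha : HasNestedImages f gs H) (j : ℕ) : (limSet gs H x j).Nonempty := by
  have hj : ∀ i, j ≤ ns (j + i) := fun i => (j.le_add_right i).trans hns.le_apply
  obtain ⟨w, hw⟩ := IsCompact.nonempty_iInter_of_sequence_nonempty_isCompact_isClosed
    (fun i => approxSet gs H x j (j + i))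
    (fun i => approxSet_succ_subset hx hns.monotone hms ha (hj i))
    (fun i => approxSet_nonempty hne (hj i))
    (isCompact_approxSet hgc hcl x j _)
    (fun i => (isCompact_approxSet hgc hcl x j _).isClosed)
  refine ⟨w, fun k hjk => ?_⟩
  rw [← approxSet_of_le hjk]
  exact approxSet_subset_of_le hx hns.monotone hms ha hjk (k.le_add_left j) (mem_iInter.mp hw k)

theorem limSet_subsingleton [∀ n, MetricSpace (Y n)] [∀ n, CompactSpace (Y n)]
    {x : ∀ n, X n} (hns : StrictMono ns) {j : ℕ}
    (hb : Tendsto (fun k => diam (approxSet gs H x j k)) atTop (𝓝 0)) :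
    (limSet gs H x j).Subsingleton := by
  have hj : ∀ᶠ k in atTop, j ≤ ns k :=
    (eventually_ge_atTop j).mono fun k hk => hk.trans hns.le_apply
  intro a ha b hb'
  refine eq_of_eventually_mem_of_tendsto_diam hb (Eventually.of_forall fun _ =>
    isBounded_of_compactSpace) ?_ ?_
  · filter_upwards [hj] with k hjk using (approxSet_of_le hjk).symm ▸ ha k hjk
  · filter_upwards [hj] with k hjk using (approxSet_of_le hjk).symm ▸ hb' k hjk

theorem mapsTo_limSet_succ {x : ∀ n, X n} (hx : x ∈ invLim X f) (hns : StrictMono ns)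
    (hms : Monotone ms) (ha : HasNestedImages f gs H) (j : ℕ) :
    MapsTo (gs j) (limSet gs H x (j + 1)) (limSet gs H x j) := by
  intro w hw k hj
  have hj' : j + 1 ≤ ns (k + 1) := Nat.succ_le_of_lt (hj.trans_lt (hns k.lt_succ_self))
  obtain ⟨y, hy, rfl⟩ := hw (k + 1) hj'
  rw [← approxSet_of_le hj]
  refine approxSet_succ_subset hx hns.monotone hms ha hj ?_
  rw [approxSet_of_le (hj.trans (hns.monotone k.le_succ))]
  refine ⟨y, hy, ?_⟩
  rw [← bondMap_succ_self gs j, ← comp_apply (f := bondMap gs _), bondMap_comp]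

theorem isClosed_setOf_mem_limSet [∀ n, TopologicalSpace (X n)] [∀ n, CompactSpace (X n)]
    [∀ n, T2Space (X n)] [∀ n, TopologicalSpace (Y n)] [∀ n, CompactSpace (Y n)]
    [∀ n, T2Space (Y n)] (hgc : ∀ n, Continuous (gs n))
    (hgraph : ∀ k, IsClosed {p : X (ms k) × Y (ns k) | p.2 ∈ H k p.1}) (j : ℕ) :
    IsClosed {p : (∀ n, X n) × Y j | p.2 ∈ limSet gs H p.1 j} := by
  change IsClosed
    {p : (∀ n, X n) × Y j | ∀ k (hj : j ≤ ns k), p.2 ∈ bondMap gs hj '' H k (p.1 (ms k))}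
  simp only [ofPred_forall]
  exact isClosed_iInter fun k => isClosed_iInter fun hj =>
    (isClosed_setOf_mem_image (hgraph k) (continuous_bondMap gs hgc hj)).preimage
      (((continuous_apply (ms k)).comp continuous_fst).prodMk continuous_snd)

theorem exists_mem_invLim_forall_mem_limSet [∀ n, TopologicalSpace (X n)]
    [∀ n, CompactSpace (X n)] [∀ n, T2Space (X n)] [∀ n, TopologicalSpace (Y n)]
    (hfc : ∀ n, Continuous (f n)) (hfs : ∀ n, Surjective (f n))
    (hns : Monotone ns) (hms : Monotone ms) (ha : HasNestedImages f gs H)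
    (hgraph : ∀ k, IsClosed {p : X (ms k) × Y (ns k) | p.2 ∈ H k p.1})
    (hc : ∀ k (y : Y (ns k)), ∃ a, y ∈ H k a) {w : ∀ n, Y n} (hw : w ∈ invLim Y gs) :
    ∃ z ∈ invLim X f, ∀ j, w j ∈ limSet gs H z j := by
  let K : ℕ → Set (∀ n, X n) := fun k => invLim X f ∩ {z | w (ns k) ∈ H k (z (ms k))}
  have hK_closed : ∀ k, IsClosed (K k) := fun k => (isClosed_invLim f hfc).inter
    ((hgraph k).preimage ((continuous_apply (ms k)).prodMk continuous_const))
  have hK_nonempty : ∀ k, (K k).Nonempty := by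
    intro k
    obtain ⟨a, ha⟩ := hc k (w (ns k))
    obtain ⟨z, hz, rfl⟩ := exists_mem_invLim_apply_eq f hfs a
    exact ⟨z, hz, ha⟩
  -- `w_{n_k}` is the image of `w_{n_{k+1}}`, so this is `approxSet_succ_subset` at `j = n_k`.
  have hK_succ : ∀ k, K (k + 1) ⊆ K k := by
    rintro k z ⟨hz, hzk⟩
    refine ⟨hz, ?_⟩
    have hk : ns k ≤ ns (k + 1) := hns k.le_succ
    have h := approxSet_succ_subset hz hns hms ha le_rfl (by
      rw [approxSet_of_le hk]
      exact ⟨_, hzk, (apply_eq_bondMap_of_mem_invLim gs hw hk).symm⟩)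
    rwa [approxSet_of_le le_rfl, bondMap_self_s7, image_id] at h
  obtain ⟨z, hz⟩ := IsCompact.nonempty_iInter_of_sequence_nonempty_isCompact_isClosed K hK_succ
    hK_nonempty (hK_closed 0).isCompact hK_closed
  rw [mem_iInter] at hz
  exact ⟨z, (hz 0).1, fun j k hj =>
    ⟨w (ns k), (hz k).2, (apply_eq_bondMap_of_mem_invLim gs hw hj).symm⟩⟩

end Approximation

theorem stmt7_general
    {X Y : ℕ → Type*} [∀ n, MetricSpace (X n)] [∀ n, CompactSpace (X n)]
    [∀ n, MetricSpace (Y n)] [∀ n, CompactSpace (Y n)]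
    (f : ∀ n, X (n + 1) → X n) (gs : ∀ n, Y (n + 1) → Y n)
    (hfc : ∀ n, Continuous (f n)) (hfs : ∀ n, Surjective (f n))
    (hgc : ∀ n, Continuous (gs n))
    (ns ms : ℕ → ℕ)
    (hms : ∀ k, ms k ≤ ms (k + 1)) (hns : ∀ k, ns k < ns (k + 1))
    (H : ∀ k, X (ms k) → Set (Y (ns k))) (hH : ∀ k, IsUSC (H k))
    (ha : ∀ k r : ℕ, k < r → ∀ (hnr : ns k ≤ ns r) (hmr : ms k ≤ ms r),
      ∀ j : ℕ, ∀ hj : j ≤ ns k, ∀ x : X (ms r),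
        bondMap gs (hj.trans hnr) '' H r x ⊆
          bondMap gs hj '' H k (bondMap f hmr x))
    (hb : ∀ j : ℕ, ∀ z : ↥(invLim X f),
      Tendsto (fun k =>
          diam (if hj : j ≤ ns k then
            bondMap gs hj '' H k (z.1 (ms k))
          else (∅ : Set (Y j))))
        atTop (nhds (0 : ℝ)))
    (hc : ∀ k, ∀ y : Y (ns k), ∃ x : X (ms k), y ∈ H k x) :
    ∃ g : ↥(invLim X f) → ↥(invLim Y gs), Continuous g ∧ Surjective g ∧
      ∀ k j : ℕ, ∀ hj : j ≤ ns k, ∀ z : ↥(invLim X f),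
        (g z).1 j ∈ bondMap gs hj '' H k (z.1 (ms k)) := by
  have hns_strict : StrictMono ns := strictMono_nat_of_lt_succ hns
  have hms_mono : Monotone ms := monotone_nat_of_le_succ hms
  have ha_succ : HasNestedImages f gs H := fun k => ha k (k + 1) k.lt_succ_self
  choose φ hφ using fun z : invLim X f =>
    limSet_nonempty z.2 hgc (fun k => (hH k).1) (fun k => (hH k).2.1) hns_strict hms_mono ha_succ
  have mem_limSet_iff : ∀ z j w, w ∈ limSet gs H z.1 j ↔ w = φ z j := fun z j w =>
    ⟨fun hw => limSet_subsingleton hns_strict (hb j z) hw (hφ z j), fun h => h ▸ hφ z j⟩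
  let g : invLim X f → invLim Y gs := fun z => ⟨φ z, fun j => ((mem_limSet_iff z j _).mp
    (mapsTo_limSet_succ z.2 hns_strict hms_mono ha_succ j (hφ z (j + 1)))).symm⟩
  refine ⟨g, ?_, fun w => ?_, fun k j hj z => hφ z j k hj⟩
  · refine Continuous.subtype_mk (continuous_pi fun j => continuous_of_isClosed_graph ?_) _
    have hgraph : {p : invLim X f × Y j | p.2 = φ p.1 j} =
        Prod.map Subtype.val id ⁻¹' {p | p.2 ∈ limSet gs H p.1 j} := by
      ext ⟨z, w⟩
      exact (mem_limSet_iff z j w).symm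
    rw [hgraph]
    exact (isClosed_setOf_mem_limSet hgc (fun k => (hH k).2.2) j).preimage
      (continuous_subtype_val.prodMap continuous_id)
  · obtain ⟨z, hz, hwz⟩ := exists_mem_invLim_forall_mem_limSet hfc hfs hns_strict.monotone
      hms_mono ha_succ (fun k => (hH k).2.2) hc w.2
    exact ⟨⟨z, hz⟩, Subtype.ext (funext fun j =>
      ((mem_limSet_iff ⟨z, hz⟩ j _).mp (hwz j)).symm)⟩

theorem stmt7
    {X Y : ℕ → Type*} [∀ n, MetricSpace (X n)] [∀ n, CompactSpace (X n)]
    [∀ n, MetricSpace (Y n)] [∀ n, CompactSpace (Y n)]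
    (f : ∀ n, X (n + 1) → X n) (gs : ∀ n, Y (n + 1) → Y n)
    (hfc : ∀ n, Continuous (f n)) (hfs : ∀ n, Surjective (f n))
    (hgc : ∀ n, Continuous (gs n)) (hgs : ∀ n, Surjective (gs n))
    (ns ms : ℕ → ℕ)
    (hms : ∀ k, ms k ≤ ms (k + 1)) (hns : ∀ k, ns k < ns (k + 1))
    (hnm : ∀ k, ns k ≤ ms k)
    (H : ∀ k, X (ms k) → Set (Y (ns k))) (hH : ∀ k, IsUSC (H k))
    (ha : ∀ k r : ℕ, k < r → ∀ (hnr : ns k ≤ ns r) (hmr : ms k ≤ ms r),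
      ∀ j : ℕ, ∀ hj : j ≤ ns k, ∀ x : X (ms r),
        bondMap gs (hj.trans hnr) '' H r x ⊆
          bondMap gs hj '' H k (bondMap f hmr x))
    (hb : ∀ j : ℕ, ∀ z : ↥(invLim X f),
      Tendsto (fun k =>
          diam (if hj : j ≤ ns k then
            bondMap gs hj '' H k (z.1 (ms k))
          else (∅ : Set (Y j))))
        atTop (nhds (0 : ℝ)))
    (hc : ∀ k, ∀ y : Y (ns k), ∃ x : X (ms k), y ∈ H k x) :
    ∃ g : ↥(invLim X f) → ↥(invLim Y gs), Continuous g ∧ Surjective g ∧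
      ∀ k j : ℕ, ∀ hj : j ≤ ns k, ∀ z : ↥(invLim X f),
        (g z).1 j ∈ bondMap gs hj '' H k (z.1 (ms k)) :=
  stmt7_general f gs hfc hfs hgc ns ms hms hns H hH ha hb hc
end
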